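/- For all real numbers λ₁ > λ₂ > 0 and all k > 0, Φ(√(2k) · (√λ₁ − √λ₂)) > Φ(√k · (λ₁ − λ₂) / √(λ₁ + λ₂)). -/

import Mathlib

/-! `Φ` is strictly increasing, since the Gaussian charges every nonempty interval, so only the
two arguments need comparing. Writing `λ₁ - λ₂ = (√λ₁ - √λ₂)(√λ₁ + √λ₂)`, their comparison is the
strict inequality `√λ₁ + √λ₂ < √(2(λ₁ + λ₂))` between the arithmetic and quadratic means of
`√λ₁ ≠ √λ₂`. -/

open MeasureTheory ProbabilityTheory

/-- The cumulative distribution function `Φ` of the standard normal distribution `N(0,1)`. -/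
noncomputable def stdNormalCDF (x : ℝ) : ℝ := cdf (gaussianReal 0 1) x

theorem ProbabilityTheory.cdf_strictMono_of_absolutelyContinuous {μ : Measure ℝ}
    [IsProbabilityMeasure μ] (hμ : volume ≪ μ) : StrictMono (cdf μ) := by
  intro x y hxy
  have hIoc : 0 < μ (Set.Ioc x y) := by
    refine pos_iff_ne_zero.mpr fun h0 => ?_
    have := hμ h0
    simp only [Real.volume_Ioc, ENNReal.ofReal_eq_zero, sub_nonpos] at this
    exact this.not_gt hxy
  rw [← measure_cdf μ, StieltjesFunction.measure_Ioc, ENNReal.ofReal_pos] at hIoc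
  exact sub_pos.mp hIoc

theorem stdNormalCDF_strictMono : StrictMono stdNormalCDF :=
  cdf_strictMono_of_absolutelyContinuous (gaussianReal_absolutelyContinuous' 0 one_ne_zero)

theorem Real.sqrt_add_sqrt_lt_sqrt_two_mul {a b : ℝ} (ha : 0 ≤ a) (hb : 0 ≤ b) (hab : a ≠ b) :
    √a + √b < √(2 * (a + b)) := by
  have hsqrt : √a - √b ≠ 0 := sub_ne_zero.mpr fun h => hab (by rwa [Real.sqrt_inj ha hb] at h)
  rw [Real.lt_sqrt (by positivity)]
  nlinarith [sq_pos_of_ne_zero hsqrt, Real.sq_sqrt ha, Real.sq_sqrt hb]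

theorem Real.sqrt_mul_sub_div_sqrt_add_lt {a b k : ℝ} (hb : 0 ≤ b) (hab : b < a) (hk : 0 < k) :
    √k * (a - b) / √(a + b) < √(2 * k) * (√a - √b) := by
  have ha : 0 ≤ a := hb.trans hab.le
  have hdiff : a - b = (√a - √b) * (√a + √b) := by
    linear_combination -(sq_sqrt ha) + sq_sqrt hb
  have hsqrt_sub : 0 < √a - √b := sub_pos.mpr (sqrt_lt_sqrt hb hab)
  have hsqrt_mul : √(2 * k) * √(a + b) = √k * √(2 * (a + b)) := by
    rw [← sqrt_mul (by positivity), ← sqrt_mul hk.le]; ring_nf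
  rw [div_lt_iff₀ (sqrt_pos.mpr (by linarith))]
  calc √k * (a - b)
      = √k * (√a - √b) * (√a + √b) := by rw [hdiff]; ring
    _ < √k * (√a - √b) * √(2 * (a + b)) :=
        mul_lt_mul_of_pos_left (sqrt_add_sqrt_lt_sqrt_two_mul ha hb hab.ne')
          (mul_pos (sqrt_pos.mpr hk) hsqrt_sub)
    _ = √(2 * k) * (√a - √b) * √(a + b) := by rw [mul_right_comm, ← hsqrt_mul]; ring

/-- For all `λ₁ > λ₂ > 0` and all `k > 0`,
`Φ(√(2k) (√λ₁ − √λ₂)) > Φ(√k (λ₁ − λ₂)/√(λ₁ + λ₂))`. -/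
theorem stmt_10 (lam1 lam2 k : ℝ) (h2 : 0 < lam2) (h12 : lam2 < lam1) (hk : 0 < k) :
    stdNormalCDF (Real.sqrt (2 * k) * (Real.sqrt lam1 - Real.sqrt lam2))
      > stdNormalCDF (Real.sqrt k * (lam1 - lam2) / Real.sqrt (lam1 + lam2)) :=
  stdNormalCDF_strictMono (Real.sqrt_mul_sub_div_sqrt_add_lt h2.le h12 hk)
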